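/- Let A be an abelian group, λ an ordinal regarded as a directed poset, and X : λ → Set_* a diagram of pointed sets satisfying the Mittag-Leffler condition. Then the cokernel H(X,A) of the natural map ρ is algebraically compact; explicitly, H(X,A) is cotorsion and for every prime p the subgroup ⋂_{n∈ℕ} pⁿ·H(X,A) is p-divisible. -/

import Mathlib

open CategoryTheory Finsupp

universe u v w

/-- The smash product `Y ∧ A` of a pointed set `(Y, y0)` with an abelian group `A`:
the group of finitely supported functions `Y →₀ A` vanishing at the basepoint,
i.e. `⊕_{y ∈ Y∖{y0}} A`. -/
def Smash (Y : Type u) (y0 : Y) (A : Type v) [AddCommGroup A] :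
    AddSubgroup (Y →₀ A) where
  carrier := {f | f y0 = 0}
  add_mem' := by
    intro a b ha hb
    simp only [Set.mem_setOf_eq, Finsupp.add_apply] at *
    rw [ha, hb, add_zero]
  zero_mem' := by simp
  neg_mem' := by
    intro a ha
    simp only [Set.mem_setOf_eq, Finsupp.neg_apply] at *
    rw [ha, neg_zero]

theorem mem_smash {Y : Type u} {y0 : Y} {A : Type v} [AddCommGroup A] {f : Y →₀ A} :
    f ∈ Smash Y y0 A ↔ f y0 = 0 := Iff.rfl

/-- The pushforward homomorphism `g_* : Y∧A → Z∧A` induced by a (pointed) map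
`g : Y → Z`: `(g_* f)(z) = ∑_{y : g y = z} f y` for `z ≠ z0`, and `(g_* f)(z0) = 0`. -/
noncomputable def smashMap {Y : Type u} {Z : Type v} (y0 : Y) (z0 : Z) (g : Y → Z)
    (A : Type w) [AddCommGroup A] :
    Smash Y y0 A →+ Smash Z z0 A where
  toFun f := ⟨(Finsupp.mapDomain g f.1).erase z0, Finsupp.erase_same⟩
  map_zero' := by
    apply Subtype.ext
    simp
  map_add' f₁ f₂ := by
    apply Subtype.ext
    show (Finsupp.mapDomain g ((f₁ : Y →₀ A) + (f₂ : Y →₀ A))).erase z0 = _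
    rw [Finsupp.mapDomain_add, Finsupp.erase_add]
    rfl

theorem smashMap_comp {Y : Type u} {Z : Type v} {W : Type w} (y0 : Y) (z0 : Z) (w0 : W)
    (g : Y → Z) (g' : Z → W) (hg' : g' z0 = w0)
    (A : Type*) [AddCommGroup A] (f : Smash Y y0 A) :
    smashMap z0 w0 g' A (smashMap y0 z0 g A f) = smashMap y0 w0 (g' ∘ g) A f := by
  classical
  apply Subtype.ext
  show (Finsupp.mapDomain g' ((Finsupp.mapDomain g f.1).erase z0)).erase w0
      = (Finsupp.mapDomain (g' ∘ g) f.1).erase w0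
  rw [Finsupp.mapDomain_comp]
  set h := Finsupp.mapDomain g f.1 with hh
  have key : Finsupp.mapDomain g' (h.erase z0)
      = Finsupp.mapDomain g' h - Finsupp.single w0 (h z0) := by
    have h1 : h.erase z0 = h - Finsupp.single z0 (h z0) := by
      ext a
      by_cases ha : a = z0
      · subst ha; simp
      · simp [Finsupp.erase_ne ha, Finsupp.single_apply, Ne.symm ha, ha]
    rw [h1]
    have h2 := map_sub (Finsupp.mapDomain.addMonoidHom g') h (Finsupp.single z0 (h z0))
    simp only [Finsupp.mapDomain.addMonoidHom_apply] at h2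
    rw [h2, Finsupp.mapDomain_single, hg']
  rw [key]
  ext a
  by_cases ha : a = w0
  · subst ha; simp
  · simp [Finsupp.erase_ne ha, Finsupp.single_apply, Ne.symm ha, ha]
/-- The inverse limit of a diagram of pointed sets, as a subset of the product. -/
def plim {D : Type u} [Category.{v} D] (F : D ⥤ Pointed.{w}) :
    Set (∀ d : D, (F.obj d).X) :=
  {x | ∀ ⦃d d' : D⦄ (u : d ⟶ d'), (F.map u).toFun (x d) = x d'}

/-- The basepoint of the inverse limit of a diagram of pointed sets. -/
def plimPt {D : Type u} [Category.{v} D] (F : D ⥤ Pointed.{w}) : plim F :=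
  ⟨fun d => (F.obj d).point, fun _ _ u => (F.map u).map_point⟩

/-- The inverse limit `lim_D (X ∧ A)` of the diagram of abelian groups obtained by
smashing a diagram of pointed sets with an abelian group `A`. -/
noncomputable def glim {D : Type u} [Category.{v} D] (F : D ⥤ Pointed.{w})
    (A : Type*) [AddCommGroup A] :
    AddSubgroup (∀ d : D, Smash (F.obj d).X (F.obj d).point A) where
  carrier := {h | ∀ ⦃d d' : D⦄ (u : d ⟶ d'),
      smashMap (F.obj d).point (F.obj d').point (F.map u).toFun A (h d) = h d'}
  add_mem' := by
    intro a b ha hb d d' u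
    rw [Pi.add_apply, map_add, ha u, hb u]
    rfl
  zero_mem' := by
    intro d d' u
    rw [Pi.zero_apply, map_zero]
    rfl
  neg_mem' := by
    intro a ha d d' u
    rw [Pi.neg_apply, map_neg, ha u]
    rfl

/-- The natural map `ρ : (lim_D X) ∧ A → lim_D (X ∧ A)`, whose component at `d`
is induced by the projection `lim_D X → X d`. -/
noncomputable def rho {D : Type u} [Category.{v} D] (F : D ⥤ Pointed.{w})
    (A : Type*) [AddCommGroup A] :
    Smash (plim F) (plimPt F) A →+ glim F A where
  toFun f := ⟨fun d => smashMap (plimPt F) (F.obj d).point (fun x => x.1 d) A f, by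
    intro d d' u
    rw [smashMap_comp (plimPt F) (F.obj d).point (F.obj d').point _ _ (F.map u).map_point A f]
    have : ((F.map u).toFun ∘ fun x : plim F => x.1 d) = fun x : plim F => x.1 d' := by
      funext x
      exact x.2 u
    rw [this]⟩
  map_zero' := by
    apply Subtype.ext
    funext d
    show smashMap (plimPt F) (F.obj d).point (fun x => x.1 d) A 0 = (0 : Smash _ _ A)
    exact map_zero _
  map_add' f₁ f₂ := by
    apply Subtype.ext
    funext d
    show smashMap (plimPt F) (F.obj d).point (fun x => x.1 d) A (f₁ + f₂)
        = smashMap (plimPt F) (F.obj d).point (fun x => x.1 d) A f₁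
          + smashMap (plimPt F) (F.obj d).point (fun x => x.1 d) A f₂
    exact map_add _ f₁ f₂
/-- The Mittag-Leffler condition for a diagram of pointed sets indexed by a
preordered set `T` (with structure maps `X(s) → X(t)` for `t ≤ s`): for every `t`
there is `s ≥ t` such that for every `r ≥ s` the images of `X(s)` and of `X(r)`
in `X(t)` coincide. -/
def MittagLeffler {T : Type u} [Preorder T] (F : Tᵒᵖ ⥤ Pointed.{w}) : Prop :=
  ∀ t : T, ∃ s : T, ∃ hts : t ≤ s, ∀ r : T, ∀ hsr : s ≤ r,
    Set.range (F.map (homOfLE hts).op).toFun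
      = Set.range (F.map (homOfLE (hts.trans hsr)).op).toFun
/-- `C` is cotorsion, i.e. `Ext¹_ℤ(ℚ, C) = 0`.  Applying `Hom(-, C)` to the standard
free presentation `0 → ⊕_{n ∈ ℕ} ℤ → ⊕_{n ∈ ℕ} ℤ → ℚ → 0` (where the first map sends
`e_n ↦ e_n - (n+1)·e_{n+1}`) identifies `Ext¹_ℤ(ℚ, C)` with the cokernel of
`C^ℕ → C^ℕ, (x_n) ↦ (x_n - (n+1)x_{n+1})`; hence `Ext¹_ℤ(ℚ, C) = 0` iff every system
of equations `x_n - (n+1)·x_{n+1} = a_n` (`n ∈ ℕ`) is solvable in `C`. -/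
def Cotorsion (C : Type*) [AddCommGroup C] : Prop :=
  ∀ a : ℕ → C, ∃ x : ℕ → C, ∀ n : ℕ, x n - (n + 1) • x (n + 1) = a n

/-!
If `λ` has uncountable cofinality, every sequence of levels is bounded, so the support sizes of
`h ∈ lim (X ∧ A)` stabilise; beyond that level the bonding maps are bijections between supports,
the points of a support lift to threads, and `h` is in the image of `ρ`, so `H(X, A) = 0`.

If `λ` has countable cofinality, pick a cofinal sequence `t n` and filter `G = lim (X ∧ A)` by the
subgroups `W n` of elements vanishing at level `t n`. Then `G` is Hausdorff and complete for this
filtration. By Mittag-Leffler the points in the support of `h (t n)` lie in the eventual image and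
lift to threads, so the image `D` of `ρ` is dense, with control of torsion; and `D` is pure, since
finitely many threads are already separated at a single level. A quotient of a complete group by a
dense subgroup is cotorsion, and purity with torsion control makes `⋂ pⁿ (G ⧸ D)` `p`-divisible.
-/

section FilteredQuotient

variable {L : Type*} [AddCommGroup L]

/-- If `L` is complete for the filtration `W`, the solution is
`x n = ∑_{k ≥ n} (m n * ⋯ * m (k - 1)) • b k`. -/
def RecursionsSolvable (W : ℕ → AddSubgroup L) : Prop :=
  ∀ (b : ℕ → L) (m : ℕ → ℕ), (∀ n, b n ∈ W n) →
    ∃ x : ℕ → L, ∀ n, x n ∈ W n ∧ x n = b n + m n • x (n + 1)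

def AddSubgroup.IsPure (D : AddSubgroup L) : Prop :=
  ∀ (q : ℕ) (y : L), q • y ∈ D → ∃ v ∈ D, q • y = q • v

variable {W : ℕ → AddSubgroup L} {D : AddSubgroup L}

theorem cotorsion_quotient_of_dense (hW : RecursionsSolvable W)
    (hD : ∀ h n, ∃ d ∈ D, h - d ∈ W n) : Cotorsion (L ⧸ D) := by
  intro a
  choose a' ha' using fun n => QuotientAddGroup.mk_surjective (a n)
  choose d hdD hdW using fun n => hD (a' n) n
  obtain ⟨x, hx⟩ := hW (fun n => a' n - d n) (· + 1) hdW
  refine ⟨fun n => (x n : L ⧸ D), fun n => ?_⟩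
  have hd : ((d n : L) : L ⧸ D) = 0 := (QuotientAddGroup.eq_zero_iff _).2 (hdD n)
  rw [← ha' n, ← QuotientAddGroup.mk_nsmul, ← QuotientAddGroup.mk_sub, (hx n).2,
    add_sub_cancel_right, QuotientAddGroup.mk_sub, hd, sub_zero]

theorem mem_iInter_range_pow_of_eq_nsmul_succ {C : Type*} [AddMonoid C] {p : ℕ} {e : ℕ → C}
    (he : ∀ n, e n = p • e (n + 1)) (n : ℕ) :
    e n ∈ ⋂ k : ℕ, Set.range fun y : C => p ^ k • y := by
  have key : ∀ k, e n = p ^ k • e (n + k) := by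
    intro k
    induction k with
    | zero => simp
    | succ k ih => rw [ih, he (n + k), smul_smul, ← pow_succ, add_assoc]
  exact Set.mem_iInter.2 fun k => ⟨e (n + k), (key k).symm⟩

theorem exists_eq_nsmul_succ_add_of_sub_mem
    (hD : ∀ h n, ∃ d ∈ D, h - d ∈ W n ∧ ∀ q : ℕ, q • h = 0 → q • d = 0) (hpure : D.IsPure)
    {p : ℕ} {c : L} {y : ℕ → L} (hy : ∀ n, c - p ^ n • y n ∈ D) (n : ℕ) :
    ∃ v ∈ D, ∃ ε ∈ W n, p ^ n • ε = 0 ∧ y n = p • y (n + 1) + v + ε := by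
  have hdiff : p ^ n • (y n - p • y (n + 1)) ∈ D := by
    convert D.sub_mem (hy (n + 1)) (hy n) using 1
    rw [smul_sub, smul_smul, ← pow_succ]
    abel
  obtain ⟨v, hvD, hv⟩ := hpure _ _ hdiff
  have htors : p ^ n • (y n - p • y (n + 1) - v) = 0 := by rw [smul_sub, hv, sub_self]
  obtain ⟨u, huD, huW, hu⟩ := hD (y n - p • y (n + 1) - v) n
  refine ⟨v + u, D.add_mem hvD huD, _, huW, ?_, by abel⟩
  rw [smul_sub, htors, hu _ htors, sub_self]

theorem image_nsmul_iInter_range_pow_quotient (hsep : ∀ h, (∀ n, h ∈ W n) → h = 0)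
    (hW : RecursionsSolvable W)
    (hD : ∀ h n, ∃ d ∈ D, h - d ∈ W n ∧ ∀ q : ℕ, q • h = 0 → q • d = 0) (hpure : D.IsPure)
    (p : ℕ) :
    (fun y : L ⧸ D => p • y) '' (⋂ n : ℕ, Set.range fun y : L ⧸ D => p ^ n • y)
      = ⋂ n : ℕ, Set.range fun y : L ⧸ D => p ^ n • y := by
  refine Set.Subset.antisymm ?_ fun c hc => ?_
  · rintro _ ⟨y, hy, rfl⟩
    refine Set.mem_iInter.2 fun n => ?_
    obtain ⟨z, rfl⟩ := Set.mem_iInter.1 hy n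
    exact ⟨p • z, smul_comm _ _ _⟩
  obtain ⟨c, rfl⟩ := QuotientAddGroup.mk_surjective c
  have hlift : ∀ n, ∃ y : L, c - p ^ n • y ∈ D := fun n => by
    obtain ⟨z, hz⟩ := Set.mem_iInter.1 hc n
    obtain ⟨z, rfl⟩ := QuotientAddGroup.mk_surjective z
    replace hz : p ^ n • (z : L ⧸ D) = c := hz
    refine ⟨z, (QuotientAddGroup.eq_zero_iff _).1 ?_⟩
    rw [QuotientAddGroup.mk_sub, QuotientAddGroup.mk_nsmul, hz, sub_self]
  choose y hy using hlift
  choose v hvD ε hεW hε hyε using exists_eq_nsmul_succ_add_of_sub_mem hD hpure hy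
  obtain ⟨z, hz⟩ := hW ε (fun _ => p) hεW
  -- `p ^ n • z n` does not depend on `n` and lies in `W n`
  have hz0 : z 0 = 0 := hsep _ fun n => by
    have key : z 0 = p ^ n • z n := by
      induction n with
      | zero => simp
      | succ n ih => rw [ih, (hz n).2, smul_add, hε, zero_add, smul_smul, ← pow_succ]
    exact key ▸ (W n).nsmul_mem (hz n).1 _
  set e : ℕ → L ⧸ D := fun n => ((y n - z n : L) : L ⧸ D)
  have he : ∀ n, e n = p • e (n + 1) := fun n => by
    have hv : ((v n : L) : L ⧸ D) = 0 := (QuotientAddGroup.eq_zero_iff _).2 (hvD n)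
    have : y n - z n = p • (y (n + 1) - z (n + 1)) + v n := by
      rw [hyε n, (hz n).2, smul_sub]
      abel
    simp only [e, this, QuotientAddGroup.mk_add, QuotientAddGroup.mk_nsmul, hv, add_zero]
  refine ⟨e 1, mem_iInter_range_pow_of_eq_nsmul_succ he 1, ?_⟩
  show p • e 1 = _
  rw [← he 0]
  simp only [e, hz0, sub_zero]
  exact (QuotientAddGroup.eq_iff_sub_mem.2 (by simpa using hy 0)).symm

end FilteredQuotient

section SmashMap

variable {Y Z : Type*} {y0 : Y} {z0 : Z} {A : Type*} [AddCommGroup A]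

theorem smashMap_coe (g : Y → Z) (f : Smash Y y0 A) :
    ((smashMap y0 z0 g A f : Smash Z z0 A) : Z →₀ A) = (mapDomain g f).erase z0 := rfl

theorem smashMap_eq_self_of_eqOn {g : Y → Y} {f : Smash Y y0 A}
    (hg : ∀ y ∈ (f : Y →₀ A).support, g y = y) : smashMap y0 y0 g A f = f := by
  refine Subtype.ext ?_
  rw [smashMap_coe, mapDomain_congr (g := id) hg, mapDomain_id, erase_of_notMem_support]
  exact fun hy => mem_support_iff.1 hy f.2

theorem support_smashMap_subset [DecidableEq Z] (g : Y → Z) (f : Smash Y y0 A) :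
    ((smashMap y0 z0 g A f : Smash Z z0 A) : Z →₀ A).support
      ⊆ (f : Y →₀ A).support.image g := by
  rw [smashMap_coe, support_erase]
  exact (Finset.erase_subset _ _).trans mapDomain_support

theorem eq_zero_of_smashMap_eq_zero {g : Y → Z} {S : Set Y} (hg : Set.InjOn g S)
    (hS : ∀ y ∈ S, g y ≠ z0) {f : Smash Y y0 A} (hf : ↑(f : Y →₀ A).support ⊆ S)
    (h0 : smashMap y0 z0 g A f = 0) : f = 0 := by
  refine Subtype.ext (support_eq_empty.1 (Finset.eq_empty_of_forall_notMem fun y hy => ?_))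
  have h := congrArg (fun k : Smash Z z0 A => (k : Z →₀ A) (g y)) h0
  simp only [smashMap_coe, erase_ne (hS y (hf hy)), mapDomain_apply' S _ hf hg (hf hy)] at h
  exact mem_support_iff.1 hy h

end SmashMap

open Opposite Filter

section Limits

variable {D : Type*} [Category* D] {F : D ⥤ Pointed.{w}} {A : Type*} [AddCommGroup A]

theorem rho_apply (g : Smash (plim F) (plimPt F) A) (d : D) :
    (rho F A g).1 d = smashMap _ _ (fun x : plim F => x.1 d) A g := rfl

theorem rho_smashMap_apply {Y : Type*} {y0 : Y} (θ : Y → plim F) (f : Smash Y y0 A) (d : D) :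
    (rho F A (smashMap y0 (plimPt F) θ A f)).1 d = smashMap y0 _ (fun y => (θ y).1 d) A f :=
  smashMap_comp _ _ _ θ (fun x : plim F => x.1 d) rfl A f

variable (F A) in
noncomputable def glim.eval (d : D) : glim F A →+ Smash (F.obj d).X (F.obj d).point A :=
  (Pi.evalAddMonoidHom _ d).comp (glim F A).subtype

theorem glim.eval_apply (h : glim F A) (d : D) : glim.eval F A d h = h.1 d := rfl

abbrev glim.support (h : glim F A) (d : D) : Finset (F.obj d).X :=
  ((h.1 d : Smash (F.obj d).X (F.obj d).point A) : (F.obj d).X →₀ A).support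

theorem glim.exists_eventually_eq (h : ℕ → glim F A)
    (hconst : ∀ d, ∃ v, ∀ᶠ K in atTop, (h K).1 d = v) :
    ∃ x : glim F A, ∀ d, ∀ᶠ K in atTop, (h K).1 d = x.1 d := by
  choose v hv using hconst
  refine ⟨⟨v, fun d d' f => ?_⟩, hv⟩
  obtain ⟨K, hK, hK'⟩ := ((hv d).and (hv d')).exists
  rw [← hK, ← hK']
  exact (h K).2 f

end Limits

section Diagram

variable {T : Type*} [Preorder T] (F : Tᵒᵖ ⥤ Pointed.{w}) {A : Type*} [AddCommGroup A]

def bond {s t : T} (h : s ≤ t) : (F.obj (op t)).X → (F.obj (op s)).X :=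
  (F.map (homOfLE h).op).toFun

theorem bond_refl {s : T} (y : (F.obj (op s)).X) : bond F le_rfl y = y := by
  rw [bond, show (homOfLE (le_refl s)).op = 𝟙 (op s) from rfl, F.map_id]
  rfl

theorem bond_bond {r s t : T} (hrs : r ≤ s) (hst : s ≤ t) (y : (F.obj (op t)).X) :
    bond F hrs (bond F hst y) = bond F (hrs.trans hst) y := by
  rw [bond, bond, bond, show (homOfLE (hrs.trans hst)).op = (homOfLE hst).op ≫ (homOfLE hrs).op
    from rfl, F.map_comp]
  rfl

variable {F}

theorem plim.bond_apply (x : plim F) {s t : T} (h : s ≤ t) :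
    bond F h (x.1 (op t)) = x.1 (op s) :=
  x.2 _

theorem glim.smashMap_bond (h : glim F A) {s t : T} (hst : s ≤ t) :
    smashMap _ _ (bond F hst) A (h.1 (op t)) = h.1 (op s) :=
  h.2 _

theorem glim.support_subset_image (h : glim F A) {s t : T} [DecidableEq (F.obj (op s)).X]
    (hst : s ≤ t) : glim.support h (op s) ⊆ (glim.support h (op t)).image (bond F hst) := by
  have h' := support_smashMap_subset (z0 := (F.obj (op s)).point) (bond F hst) (h.1 (op t))
  rwa [glim.smashMap_bond] at h'

theorem glim.eq_zero_of_cofinal {h : glim F A} (hcof : ∀ s, ∃ t, s ≤ t ∧ h.1 (op t) = 0) :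
    h = 0 := by
  refine Subtype.ext (funext fun d => ?_)
  obtain ⟨t, hdt, ht⟩ := hcof (unop d)
  rw [← glim.smashMap_bond h hdt, ht, map_zero]
  rfl

theorem plim.eventually_ne [IsDirectedOrder T] {x x' : plim F} (hne : x ≠ x') :
    ∀ᶠ u in atTop, x.1 (op u) ≠ x'.1 (op u) := by
  obtain ⟨d, hd⟩ : ∃ d, x.1 d ≠ x'.1 d := Function.ne_iff.1 (Subtype.coe_ne_coe.2 hne)
  filter_upwards [eventually_ge_atTop (unop d)] with u hu heq
  exact hd (by rw [← plim.bond_apply x hu, ← plim.bond_apply x' hu, heq])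

theorem plim.exists_injOn_eval [IsDirectedOrder T] [Nonempty T] (S : Finset (plim F)) :
    ∃ u : T, Set.InjOn (fun x : plim F => x.1 (op u)) S := by
  have h : ∀ᶠ u in atTop, ∀ p ∈ S ×ˢ S, p.1 ≠ p.2 → p.1.1 (op u) ≠ p.2.1 (op u) :=
    (eventually_all_finset _).2 fun p _ => by
      by_cases hp : p.1 = p.2
      · exact Eventually.of_forall fun _ h => absurd hp h
      · exact (plim.eventually_ne hp).mono fun _ h _ => h
  obtain ⟨u, hu⟩ := h.exists
  exact ⟨u, fun x hx x' hx' heq => not_not.1 fun hne =>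
    hu (x, x') (Finset.mem_product.2 ⟨hx, hx'⟩) hne heq⟩

theorem plim.exists_eval_eq_of_compatible {ι : Type*} [Preorder ι] [IsDirectedOrder ι]
    {r : ι → T} (hr : Monotone r) (hcof : ∀ s, ∃ i, s ≤ r i) (z : ∀ i, (F.obj (op (r i))).X)
    (hz : ∀ i j (hij : i ≤ j), bond F (hr hij) (z j) = z i) :
    ∃ x : plim F, ∀ i, x.1 (op (r i)) = z i := by
  choose i hi using hcof
  have key : ∀ (s : T) (j : ι) (hj : s ≤ r j), bond F hj (z j) = bond F (hi s) (z (i s)) := by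
    intro s j hj
    obtain ⟨k, hjk, hik⟩ := directed_of (· ≤ ·) j (i s)
    rw [← hz _ _ hjk, ← hz _ _ hik, bond_bond, bond_bond]
  refine ⟨⟨fun d => bond F (hi (unop d)) (z (i (unop d))), fun d d' f => ?_⟩, fun j => ?_⟩
  · show bond F (leOfHom f.unop) _ = _
    rw [bond_bond, key]
  · show bond F _ _ = _
    rw [← key _ j le_rfl, bond_refl]

theorem rho_smashMap_eval_eq {s : T} (θ : (F.obj (op s)).X → plim F)
    (f : Smash (F.obj (op s)).X (F.obj (op s)).point A)
    (hθ : ∀ y ∈ (f : _ →₀ A).support, (θ y).1 (op s) = y) :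
    (rho F A (smashMap _ (plimPt F) θ A f)).1 (op s) = f := by
  rw [rho_smashMap_apply]
  exact smashMap_eq_self_of_eqOn hθ

theorem rho_range_isPure [IsDirectedOrder T] : (rho F A).range.IsPure := by
  rintro q y ⟨g, hg⟩
  rcases isEmpty_or_nonempty T with hT | hT
  · have hy : y = 0 := Subtype.ext (funext fun d => isEmptyElim (unop d))
    exact ⟨0, zero_mem _, by rw [hy]⟩
  classical
  have : Nonempty (plim F) := ⟨plimPt F⟩
  set S := insert (plimPt F) (g : plim F →₀ A).support
  obtain ⟨u, hinj⟩ := plim.exists_injOn_eval S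
  set σ := Function.invFunOn (fun x : plim F => x.1 (op u)) S
  have hσ := hinj.leftInvOn_invFunOn
  have hsplit : smashMap _ (plimPt F) σ A ((rho F A g).1 (op u)) = g := by
    rw [rho_apply, smashMap_comp _ (F.obj (op u)).point _ _ σ (hσ (Finset.mem_insert_self _ _))]
    exact smashMap_eq_self_of_eqOn fun x hx => hσ (Finset.mem_insert_of_mem hx)
  refine ⟨rho F A (smashMap _ (plimPt F) σ A (y.1 (op u))), ⟨_, rfl⟩, ?_⟩
  rw [← map_nsmul (rho F A), ← map_nsmul (smashMap _ (plimPt F) σ A)]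
  change q • y = rho F A (smashMap _ (plimPt F) σ A ((q • y).1 (op u)))
  rw [← hg, hsplit]

end Diagram

theorem Finset.sum_Ico_prod_smul_eq_add {M : Type*} [AddCommMonoid M] (b : ℕ → M) (m : ℕ → ℕ)
    {n K : ℕ} (h : n < K) :
    ∑ k ∈ Finset.Ico n K, (∏ i ∈ Finset.Ico n k, m i) • b k
      = b n + m n • ∑ k ∈ Finset.Ico (n + 1) K, (∏ i ∈ Finset.Ico (n + 1) k, m i) • b k := by
  rw [Finset.sum_eq_sum_Ico_succ_bot h, Finset.Ico_self, Finset.prod_empty, one_smul,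
    Finset.smul_sum]
  refine congrArg _ (Finset.sum_congr rfl fun k hk => ?_)
  rw [Finset.prod_eq_prod_Ico_succ_bot (Finset.mem_Ico.1 hk).1, mul_smul]

section CountableCofinality

variable {T : Type*} [Preorder T] {F : Tᵒᵖ ⥤ Pointed.{w}} {A : Type*} [AddCommGroup A]

theorem MittagLeffler.isMittagLeffler [IsDirectedOrder T] (hML : MittagLeffler F) :
    (F ⋙ forget Pointed).IsMittagLeffler := by
  intro j
  obtain ⟨s, hts, hstab⟩ := hML (unop j)
  refine ⟨op s, (homOfLE hts).op, fun k g => ?_⟩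
  obtain ⟨r, hsr, hkr⟩ := directed_of (· ≤ ·) s (unop k)
  change Set.range (bond F hts) ⊆ Set.range (bond F (leOfHom g.unop))
  rw [bond, hstab r hsr]
  rintro _ ⟨y, rfl⟩
  exact ⟨bond F hkr y, bond_bond F _ _ y⟩

theorem glim.mem_eventualRange (h : glim F A) {s : T} {y : (F.obj (op s)).X}
    (hy : y ∈ glim.support h (op s)) :
    y ∈ (F ⋙ forget Pointed).eventualRange (op s) := by
  classical
  refine (Functor.mem_eventualRange_iff _).2 fun k f => ?_
  obtain ⟨z, -, hz⟩ := Finset.mem_image.1 (glim.support_subset_image h (leOfHom f.unop) hy)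
  exact ⟨z, hz⟩

theorem plim.exists_eval_eq_of_mem_eventualRange (hML : (F ⋙ forget Pointed).IsMittagLeffler)
    {t : ℕ → T} (ht : Monotone t) (hcof : ∀ s, ∃ n, s ≤ t n) {s : T} {y : (F.obj (op s)).X}
    (hy : y ∈ (F ⋙ forget Pointed).eventualRange (op s)) : ∃ x : plim F, x.1 (op s) = y := by
  obtain ⟨N, hN⟩ := hcof s
  set r : ℕ → T := fun k => t (N + k)
  have hr : Monotone r := fun k l hkl => ht (by omega)
  set E : ℕ → Type _ := fun k => (F ⋙ forget Pointed).eventualRange (op (r k))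
  have hlift : ∀ {a b : T} (hab : a ≤ b) (z : (F.obj (op a)).X),
      z ∈ (F ⋙ forget Pointed).eventualRange (op a) →
        ∃ z' ∈ (F ⋙ forget Pointed).eventualRange (op b), bond F hab z' = z :=
    fun hab _ hz => hML.subset_image_eventualRange _ (homOfLE hab).op hz
  choose lift hlift_mem hlift using @hlift
  let z : ∀ k, E k := fun k => Nat.rec (motive := E) ⟨lift hN y hy, hlift_mem hN y hy⟩
    (fun k zk => ⟨lift (hr k.le_succ) zk.1 zk.2, hlift_mem (hr k.le_succ) zk.1 zk.2⟩) k
  have hz : ∀ k l (hkl : k ≤ l), bond F (hr hkl) (z l).1 = (z k).1 := by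
    intro k l hkl
    induction l, hkl using Nat.le_induction with
    | base => exact bond_refl F _
    | succ l hkl ih =>
      rw [← ih, ← bond_bond F (hr hkl) (hr l.le_succ)]
      exact congrArg _ (hlift _ _ _)
  obtain ⟨x, hx⟩ := plim.exists_eval_eq_of_compatible hr
    (fun s' => (hcof s').imp fun n hn => hn.trans (ht (Nat.le_add_left n N))) (fun k => (z k).1) hz
  exact ⟨x, by rw [← plim.bond_apply x hN]; exact (congrArg _ (hx 0)).trans (hlift hN y hy)⟩

theorem rho_range_dense_of_isMittagLeffler (hML : (F ⋙ forget Pointed).IsMittagLeffler)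
    {t : ℕ → T} (ht : Monotone t) (hcof : ∀ s, ∃ n, s ≤ t n) (h : glim F A) (s : T) :
    ∃ d ∈ (rho F A).range, h - d ∈ (glim.eval F A (op s)).ker ∧
      ∀ q : ℕ, q • h = 0 → q • d = 0 := by
  have hthread : ∀ y, ∃ x : plim F, y ∈ glim.support h (op s) → x.1 (op s) = y := fun y => by
    by_cases hy : y ∈ glim.support h (op s)
    · obtain ⟨x, hx⟩ := plim.exists_eval_eq_of_mem_eventualRange hML ht hcof
        (glim.mem_eventualRange h hy)
      exact ⟨x, fun _ => hx⟩
    · exact ⟨plimPt F, fun hy' => absurd hy' hy⟩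
  choose θ hθ using hthread
  refine ⟨_, ⟨smashMap _ (plimPt F) θ A (h.1 (op s)), rfl⟩, ?_, fun q hq => ?_⟩
  · rw [AddMonoidHom.mem_ker, map_sub, glim.eval_apply, glim.eval_apply,
      rho_smashMap_eval_eq θ _ hθ, sub_self]
  · have hq' : q • h.1 (op s) = 0 := congrArg (fun k : glim F A => k.1 (op s)) hq
    rw [← map_nsmul (rho F A), ← map_nsmul (smashMap _ (plimPt F) θ A), hq', map_zero, map_zero]

theorem recursionsSolvable_ker_eval {t : ℕ → T} (ht : Monotone t) (hcof : ∀ s, ∃ n, s ≤ t n) :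
    RecursionsSolvable fun n => (glim.eval F A (op (t n))).ker := by
  intro b m hb
  have hvan : ∀ k {s}, s ≤ t k → (b k).1 (op s) = 0 := fun k s hs => by
    rw [← glim.smashMap_bond (b k) hs, show (b k).1 (op (t k)) = 0 from hb k, map_zero]
  set S : ℕ → ℕ → glim F A := fun n K => ∑ k ∈ Finset.Ico n K, (∏ i ∈ Finset.Ico n k, m i) • b k
  have hS : ∀ n K d, (S n K).1 d = ∑ k ∈ Finset.Ico n K, (∏ i ∈ Finset.Ico n k, m i) • (b k).1 d :=
    fun n K d => by simp only [S, ← glim.eval_apply, map_sum, map_nsmul]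
  have hconst : ∀ n d, ∃ v, ∀ᶠ K in atTop, (S n K).1 d = v := fun n d => by
    obtain ⟨N, hN⟩ := hcof (unop d)
    refine ⟨(S n N).1 d, (eventually_ge_atTop N).mono fun K hK => ?_⟩
    rw [hS, hS]
    refine (Finset.sum_subset (Finset.Ico_subset_Ico_right hK) fun k hk hkN => ?_).symm
    have hNk : N ≤ k := by simp only [Finset.mem_Ico] at hk hkN; omega
    rw [hvan k (hN.trans (ht hNk)), smul_zero]
  choose x hx using fun n => glim.exists_eventually_eq (S n) (hconst n)
  refine ⟨x, fun n => ⟨?_, ?_⟩⟩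
  · obtain ⟨K, hK⟩ := (hx n (op (t n))).exists
    show (x n).1 (op (t n)) = 0
    rw [← hK, hS]
    exact Finset.sum_eq_zero fun k hk => by
      rw [hvan k (ht (Finset.mem_Ico.1 hk).1), smul_zero]
  · refine Subtype.ext (funext fun d => ?_)
    obtain ⟨K, hnK, hK, hK'⟩ := ((eventually_gt_atTop n).and ((hx n d).and (hx (n + 1) d))).exists
    rw [← hK]
    show _ = (b n).1 d + m n • (x (n + 1)).1 d
    rw [← hK', hS, hS, Finset.sum_Ico_prod_smul_eq_add _ _ hnK]

end CountableCofinality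

theorem exists_forall_ge_eq_of_monotone {T : Type*} [Preorder T] [Nonempty T]
    (hbdd : ∀ c : ℕ → T, BddAbove (Set.range c)) {f : T → ℕ} (hf : Monotone f) :
    ∃ s₀, ∀ s, s₀ ≤ s → f s = f s₀ := by
  have hfbdd : BddAbove (Set.range f) := by
    by_contra hnot
    have hunbdd : ∀ n : ℕ, ∃ s, n < f s := fun n => by
      obtain ⟨_, ⟨s, rfl⟩, hs⟩ := not_bddAbove_iff.1 hnot n
      exact ⟨s, hs⟩
    choose c hc using hunbdd
    obtain ⟨u, hu⟩ := hbdd c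
    exact (hc (f u)).not_ge (hf (hu ⟨f u, rfl⟩))
  obtain ⟨s₀, hs₀⟩ := Nat.sSup_mem (Set.range_nonempty f) hfbdd
  refine ⟨s₀, fun s hs => le_antisymm ?_ (hf hs)⟩
  rw [hs₀]
  exact le_csSup hfbdd ⟨s, rfl⟩

section UncountableCofinality

variable {T : Type*} [Preorder T] {F : Tᵒᵖ ⥤ Pointed.{w}} {A : Type*} [AddCommGroup A]

def glim.SupportStableFrom (h : glim F A) (s₀ : T) : Prop :=
  ∀ ⦃s t : T⦄, s₀ ≤ s → ∀ hst : s ≤ t,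
    Set.BijOn (bond F hst) ↑(glim.support h (op t)) ↑(glim.support h (op s))

theorem glim.SupportStableFrom.bijOn {h : glim F A} {s₀ s t : T}
    (hs₀ : glim.SupportStableFrom h s₀) (hs : s₀ ≤ s) (hst : s ≤ t) :
    Set.BijOn (bond F hst) ↑(glim.support h (op t)) ↑(glim.support h (op s)) :=
  hs₀ hs hst

theorem glim.exists_supportStableFrom [Nonempty T]
    (hbdd : ∀ c : ℕ → T, BddAbove (Set.range c)) (h : glim F A) :
    ∃ s₀, glim.SupportStableFrom h s₀ := by
  classical
  obtain ⟨s₀, hs₀⟩ := exists_forall_ge_eq_of_monotone hbdd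
    (f := fun s => (glim.support h (op s)).card)
    fun s t hst =>
      (Finset.card_le_card (glim.support_subset_image h hst)).trans Finset.card_image_le
  refine ⟨s₀, fun s t hs hst => ?_⟩
  have hcard := (hs₀ t (hs.trans hst)).trans (hs₀ s hs).symm
  have himage := Finset.eq_of_subset_of_card_le (glim.support_subset_image h hst)
    (Finset.card_image_le.trans hcard.le)
  have hbij := (Finset.card_image_iff.1 (by rw [← himage, hcard])).bijOn_image
  rwa [← Finset.coe_image, ← himage] at hbij

theorem glim.SupportStableFrom.exists_thread [IsDirectedOrder T] {h : glim F A} {s₀ : T}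
    (hs₀ : glim.SupportStableFrom h s₀) {y : (F.obj (op s₀)).X} (hy : y ∈ glim.support h (op s₀)) :
    ∃ x : plim F, x.1 (op s₀) = y ∧ ∀ s, s₀ ≤ s → x.1 (op s) ∈ glim.support h (op s) := by
  have hpre : ∀ s : {s // s₀ ≤ s}, ∃ z ∈ glim.support h (op s.1), bond F s.2 z = y :=
    fun s => (hs₀.bijOn le_rfl s.2).surjOn hy
  choose z hz hzy using hpre
  have : IsDirectedOrder {s // s₀ ≤ s} := ⟨fun a b =>
    let ⟨c, hac, hbc⟩ := directed_of (· ≤ ·) a.1 b.1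
    ⟨⟨c, a.2.trans hac⟩, hac, hbc⟩⟩
  have hcompat : ∀ (i j : {s // s₀ ≤ s}) (hij : i ≤ j), bond F hij (z j) = z i := fun i j hij =>
    (hs₀.bijOn le_rfl i.2).injOn ((hs₀.bijOn i.2 hij).mapsTo (hz j)) (hz i)
      (by rw [bond_bond, hzy, hzy])
  obtain ⟨x, hx⟩ := plim.exists_eval_eq_of_compatible (r := Subtype.val) (fun _ _ hij => hij)
    (fun s => let ⟨c, hs₀c, hsc⟩ := directed_of (· ≤ ·) s₀ s; ⟨⟨c, hs₀c⟩, hsc⟩) z hcompat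
  refine ⟨x, ?_, fun s hs => by rw [hx ⟨s, hs⟩]; exact hz ⟨s, hs⟩⟩
  rw [hx ⟨s₀, le_rfl⟩, ← hzy ⟨s₀, le_rfl⟩, bond_refl]

theorem rho_surjective [IsDirectedOrder T] (hbdd : ∀ c : ℕ → T, BddAbove (Set.range c)) :
    Function.Surjective (rho F A) := by
  intro h
  rcases isEmpty_or_nonempty T with hT | hT
  · exact ⟨0, Subtype.ext (funext fun d => isEmptyElim (unop d))⟩
  classical
  obtain ⟨s₀, hs₀⟩ := glim.exists_supportStableFrom hbdd h
  have hthread : ∀ y, ∃ x : plim F, y ∈ glim.support h (op s₀) →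
      x.1 (op s₀) = y ∧ ∀ s, s₀ ≤ s → x.1 (op s) ∈ glim.support h (op s) := fun y => by
    by_cases hy : y ∈ glim.support h (op s₀)
    · obtain ⟨x, hx⟩ := hs₀.exists_thread hy
      exact ⟨x, fun _ => hx⟩
    · exact ⟨plimPt F, fun hy' => absurd hy' hy⟩
  choose θ hθ using hthread
  set g := smashMap _ (plimPt F) θ A (h.1 (op s₀))
  refine ⟨g, (sub_eq_zero.1 (glim.eq_zero_of_cofinal fun s => ?_)).symm⟩
  obtain ⟨t, hst, hs₀t⟩ := directed_of (· ≤ ·) s s₀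
  -- `(h - ρ g)(t)` is supported where the bonding map to `s₀` is injective, and vanishes at `s₀`
  refine ⟨t, hst, eq_zero_of_smashMap_eq_zero (hs₀.bijOn le_rfl hs₀t).injOn
    (fun y hy hpt => by
      have hmem := (hs₀.bijOn le_rfl hs₀t).mapsTo hy
      rw [hpt] at hmem
      exact mem_support_iff.1 hmem (h.1 (op s₀)).2)
    (fun y hy => ?_) ?_⟩
  · have hy' : y ∈ ((h.1 (op t)).1 - ((rho F A g).1 (op t)).1).support := hy
    rcases Finset.mem_union.1 (Finsupp.support_sub hy') with hy' | hy'
    · exact hy'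
    · rw [rho_smashMap_apply] at hy'
      obtain ⟨y', hy'S, rfl⟩ := Finset.mem_image.1 (support_smashMap_subset _ _ hy')
      exact (hθ y' hy'S).2 t hs₀t
  · rw [show (h - rho F A g).1 (op t) = h.1 (op t) - (rho F A g).1 (op t) from rfl, map_sub,
      glim.smashMap_bond, glim.smashMap_bond, rho_smashMap_eval_eq _ _ fun y hy => (hθ y hy).1,
      sub_self]

end UncountableCofinality

theorem Cotorsion.of_subsingleton (C : Type*) [AddCommGroup C] [Subsingleton C] : Cotorsion C :=
  fun _ => ⟨0, fun _ => Subsingleton.elim _ _⟩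

theorem image_nsmul_iInter_range_pow_of_subsingleton {C : Type*} [AddCommGroup C] [Subsingleton C]
    (p : ℕ) :
    (fun y : C => p • y) '' (⋂ n : ℕ, Set.range fun y : C => p ^ n • y)
      = ⋂ n : ℕ, Set.range fun y : C => p ^ n • y := by
  have h0 : (0 : C) ∈ ⋂ n : ℕ, Set.range fun y : C => p ^ n • y :=
    Set.mem_iInter.2 fun n => ⟨0, smul_zero _⟩
  rw [Set.Nonempty.eq_univ ⟨0, h0⟩]
  exact Set.Nonempty.eq_univ ⟨0, 0, Set.mem_univ _, smul_zero _⟩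

theorem exists_monotone_cofinal_or_bddAbove (T : Type*) [LinearOrder T] :
    (∃ t : ℕ → T, Monotone t ∧ ∀ s, ∃ n, s ≤ t n) ∨ ∀ c : ℕ → T, BddAbove (Set.range c) := by
  refine or_iff_not_imp_right.2 fun h => ?_
  obtain ⟨c, hc⟩ := not_forall.1 h
  refine ⟨partialSups c, (partialSups c).monotone, fun s => ?_⟩
  obtain ⟨_, ⟨n, rfl⟩, hn⟩ := not_bddAbove_iff.1 hc s
  exact ⟨n, hn.le.trans (le_partialSups c n)⟩

/-- Let `A` be an abelian group, `λ` an ordinal regarded as a directed poset and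
`F : λᵒᵖ ⥤ Set_*` a diagram of pointed sets satisfying the Mittag-Leffler condition.
Then the cokernel `H(X,A)` of the natural map `ρ` is algebraically compact;
explicitly, `H(X,A)` is cotorsion and, for every prime `p`, the subgroup
`⋂_{n} pⁿ·H(X,A)` is `p`-divisible. -/
theorem stmt17 (lambda : Ordinal.{u}) (F : (lambda.ToType)ᵒᵖ ⥤ Pointed.{w})
    {A : Type*} [AddCommGroup A] (hML : MittagLeffler F) :
    Cotorsion (↥(glim F A) ⧸ (rho F A).range) ∧
      ∀ p : ℕ, p.Prime →
        (fun y : ↥(glim F A) ⧸ (rho F A).range => p • y) ''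
            (⋂ n : ℕ, Set.range fun y : ↥(glim F A) ⧸ (rho F A).range => p ^ n • y)
          = ⋂ n : ℕ, Set.range fun y : ↥(glim F A) ⧸ (rho F A).range => p ^ n • y := by
  rcases exists_monotone_cofinal_or_bddAbove lambda.ToType with ⟨t, ht, hcof⟩ | hbdd
  · have hrec := recursionsSolvable_ker_eval (F := F) (A := A) ht hcof
    have hdense (h : glim F A) (n : ℕ) :=
      rho_range_dense_of_isMittagLeffler hML.isMittagLeffler ht hcof h (t n)
    have hsep (h : glim F A) (hh : ∀ n, h ∈ (glim.eval F A (op (t n))).ker) : h = 0 :=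
      glim.eq_zero_of_cofinal fun s =>
        let ⟨n, hn⟩ := hcof s
        ⟨t n, hn, hh n⟩
    exact ⟨cotorsion_quotient_of_dense hrec fun h n => (hdense h n).imp fun _ hd => ⟨hd.1, hd.2.1⟩,
      fun p _ => image_nsmul_iInter_range_pow_quotient hsep hrec hdense rho_range_isPure p⟩
  · have : Subsingleton (glim F A ⧸ (rho F A).range) := by
      rw [AddMonoidHom.range_eq_top.2 (rho_surjective hbdd)]
      exact QuotientAddGroup.subsingleton_quotient_top
    exact ⟨Cotorsion.of_subsingleton _, fun p _ => image_nsmul_iInter_range_pow_of_subsingleton p⟩
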